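/- arXiv:2604.13619 — 3 statements merged into one kernel-verified Lean document; each statement's English description precedes it below -/
import Mathlib

section
/- Let A be a ring and B a commutative ring. Let f : A → B be a central ℤ-linear map, let n ≥ 1, and let a_1, …, a_n ∈ A. Then Σ_{σ ∈ S_n, σ(n) = n} sgn(σ) · Π_c f(a_{i_1} a_{i_2} ⋯ a_{i_k}) = f(a_n) · f_{n-1}(a_1, a_2, …, a_{n-1}), where the sum ranges over all permutations σ of [n] fixing n, and the product runs over all cycles c = (i_1, i_2, …, i_k) of σ. -/
open scoped Classical

noncomputable section

/-- A `ℤ`-linear map `f : A → B` is *central* if `f (a * a') = f (a' * a)` for all `a, a'`. -/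
def Central {A B : Type*} [Ring A] [CommRing B] (f : A →ₗ[ℤ] B) : Prop :=
  ∀ a a' : A, f (a * a') = f (a' * a)

/-- The product `a x * a (σ x) * a (σ² x) * ⋯` along the cycle of the permutation `σ`
containing `x`, starting at `x` (the cycle has length `Function.minimalPeriod σ x`). -/
def cycleProdAt {ι A : Type*} [Ring A] (a : ι → A) (σ : Equiv.Perm ι) (x : ι) : A :=
  ((List.range (Function.minimalPeriod (⇑σ) x)).map (fun j => a ((σ ^ j) x))).prod

/-- The Frobenius map of a central `ℤ`-linear map `f : A → B`, applied to a finite family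
`a : ι → A`:  `∑_{σ} sgn σ • ∏_{cycles c of σ} f (a_{i₁} a_{i₂} ⋯ a_{i_k})`, where each cycle
is represented by the product along it starting from its distinguished element (the one
minimizing a fixed enumeration of `ι`); when `f` is central this agrees with the classical
definition, which is independent of the starting points. -/
def frob {ι A B : Type*} [Fintype ι] [DecidableEq ι] [Ring A] [CommRing B]
    (f : A →ₗ[ℤ] B) (a : ι → A) : B :=
  ∑ σ : Equiv.Perm ι, (Equiv.Perm.sign σ : ℤ) •
    ∏ x : ι,
      if ∀ j : ℕ, (Fintype.equivFin ι) x ≤ (Fintype.equivFin ι) ((σ ^ j) x)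
      then f (cycleProdAt a σ x) else 1

/-- `f` is an `n`-homomorphism if it is central and its `(n+1)`-Frobenius map vanishes. -/
def IsNHom {A B : Type*} [Ring A] [CommRing B] (n : ℕ) (f : A →ₗ[ℤ] B) : Prop :=
  Central f ∧ ∀ a : Fin (n + 1) → A, frob f a = 0

/-- `π` is a set partition of the finite set `J`: its blocks are nonempty, pairwise
disjoint, and their union is `J`. -/
def IsSetPartition {α : Type*} [DecidableEq α] (J : Finset α) (π : Finset (Finset α)) : Prop :=
  (∀ P ∈ π, P.Nonempty) ∧
  (∀ P ∈ π, ∀ Q ∈ π, P ≠ Q → Disjoint P Q) ∧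
  π.biUnion id = J

/-- Delete the element `n` from the block of `π` containing it (removing the block if it
becomes empty). -/
def delPart (n : ℕ) (π : Finset (Finset ℕ)) : Finset (Finset ℕ) :=
  (π.image (fun P => P.erase n)).erase ∅

/-! Permutations of `Fin (n + 1)` fixing the last point are exactly the extensions of permutations
of `Fin n`, and extending preserves the sign. In an extension the last point is a 1-cycle,
contributing the factor `f (a (Fin.last n))`, and the remaining cycles are those of the original
permutation. What needs an argument is that `frob` enters each cycle at its least point for an
arbitrary enumeration of the index type, and the enumeration restricted to `Fin n` need not agree with
`Fintype.equivFin (Fin n)`. Centrality makes `f` take the same value on all cyclic rotations of a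
product, so `f (cycleProdAt a σ x)` is constant along cycles and the product over cycles does not
depend on which point of each cycle is chosen. -/

open Function Finset

namespace Equiv.Perm

section ExtendDomain

variable {α β : Type*} {p : β → Prop} [DecidablePred p]

theorem exists_extendDomain_eq (e : α ≃ Subtype p) {σ : Perm β} (hσ : ∀ b, ¬p b → σ b = b) :
    ∃ τ : Perm α, τ.extendDomain e = σ := by
  have hp : ∀ b, p (σ b) ↔ p b := fun b => by
    refine ⟨fun hσb => by_contra fun hb => ?_, fun hb => by_contra fun hσb => ?_⟩
    · exact hb (hσ b hb ▸ hσb)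
    · exact hσb (by rwa [σ.injective (hσ _ hσb)])
  refine ⟨e.symm.permCongr (σ.subtypePerm hp), Equiv.ext fun b => ?_⟩
  by_cases hb : p b
  · simp [extendDomain_apply_subtype _ _ hb, permCongr_apply]
  · rw [extendDomain_apply_not_subtype _ _ hb, hσ b hb]

theorem extendDomain_pow_apply_image (τ : Perm α) (e : α ≃ Subtype p) (j : ℕ) (a : α) :
    (τ.extendDomain e ^ j) (e a) = e ((τ ^ j) a) := by
  rw [← extendDomain_pow, extendDomain_apply_image]

theorem minimalPeriod_extendDomain_apply_image (τ : Perm α) (e : α ≃ Subtype p) (a : α) :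
    minimalPeriod (τ.extendDomain e) (e a) = minimalPeriod τ a := by
  refine minimalPeriod_eq_minimalPeriod_iff.mpr fun j => ?_
  simp only [IsPeriodicPt, IsFixedPt, iterate_eq_pow, extendDomain_pow_apply_image,
    Subtype.coe_inj, e.apply_eq_iff_eq]

end ExtendDomain

section CycleMin

variable {α κ M : Type*} [Fintype α] [LinearOrder κ] [CommMonoid M]

theorem existsUnique_sameCycle_forall_pow_le {g : α → κ} (hg : Injective g) (σ : Perm α)
    (x : α) : ∃! y, σ.SameCycle x y ∧ ∀ j : ℕ, g y ≤ g ((σ ^ j) y) := by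
  obtain ⟨y, hy, hmin⟩ := exists_min_image {y | σ.SameCycle x y} g
    ⟨x, mem_filter.mpr ⟨mem_univ _, .rfl⟩⟩
  have hxy : σ.SameCycle x y := (mem_filter.mp hy).2
  refine ⟨y, ⟨hxy, fun j => hmin _ (mem_filter.mpr ⟨mem_univ _, sameCycle_pow_right.mpr hxy⟩)⟩,
    fun z ⟨hxz, hz⟩ => hg (le_antisymm ?_ ?_)⟩
  · obtain ⟨j, rfl⟩ := (hxz.symm.trans hxy).exists_nat_pow_eq
    exact hz j
  · exact hmin z (mem_filter.mpr ⟨mem_univ _, hxz⟩)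

theorem prod_ite_forall_pow_le_eq_prod_quotient {g : α → κ} (hg : Injective g) (σ : Perm α)
    (v : α → M) (hv : ∀ x y, σ.SameCycle x y → v x = v y) :
    ∏ x, (if ∀ j : ℕ, g x ≤ g ((σ ^ j) x) then v x else 1)
      = ∏ c ∈ univ.image (Quotient.mk (SameCycle.setoid σ)), Quotient.lift v hv c := by
  rw [prod_partition (SameCycle.setoid σ)]
  refine prod_congr rfl fun c hc => ?_
  obtain ⟨x, -, rfl⟩ := mem_image.mp hc
  obtain ⟨y, ⟨hxy, hy⟩, huniq⟩ := existsUnique_sameCycle_forall_pow_le hg σ x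
  rw [prod_eq_single_of_mem y (by simpa using Quotient.sound hxy.symm), if_pos hy]
  · exact hv y x hxy.symm
  · intro z hz hzy
    refine if_neg fun hzmin => hzy (huniq z ⟨?_, hzmin⟩)
    exact (Quotient.exact (mem_filter.mp hz).2).symm

theorem prod_ite_forall_pow_le_congr {κ' : Type*} [LinearOrder κ'] {g : α → κ} {g' : α → κ'}
    (hg : Injective g) (hg' : Injective g') (σ : Perm α) (v : α → M)
    (hv : ∀ x y, σ.SameCycle x y → v x = v y) :
    ∏ x, (if ∀ j : ℕ, g x ≤ g ((σ ^ j) x) then v x else 1)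
      = ∏ x, (if ∀ j : ℕ, g' x ≤ g' ((σ ^ j) x) then v x else 1) := by
  rw [prod_ite_forall_pow_le_eq_prod_quotient hg σ v hv,
    prod_ite_forall_pow_le_eq_prod_quotient hg' σ v hv]

end CycleMin

end Equiv.Perm

section CycleProd

variable {ι A B : Type*} [Ring A] [CommRing B]

theorem Central.map_prod_rotate {f : A →ₗ[ℤ] B} (hf : Central f) (l : List A) (k : ℕ) :
    f (l.rotate k).prod = f l.prod := by
  rw [List.rotate_eq_drop_append_take_mod, List.prod_append, hf, ← List.prod_append,
    List.take_append_drop]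

theorem cycleProdAt_pow_apply [Finite ι] (a : ι → A) (σ : Equiv.Perm ι) (x : ι) (k : ℕ) :
    cycleProdAt a σ ((σ ^ k) x)
      = (((List.range (minimalPeriod σ x)).map fun j => a ((σ ^ j) x)).rotate k).prod := by
  have hx : x ∈ periodicPts σ := σ.injective.mem_periodicPts x
  rw [cycleProdAt, ← Equiv.Perm.iterate_eq_pow, minimalPeriod_apply_iterate hx]
  congr 1
  refine List.ext_getElem (by simp) fun j _ _ => ?_
  simp only [List.getElem_map, List.getElem_range, List.getElem_rotate, List.length_map,
    List.length_range, ← Equiv.Perm.iterate_eq_pow, ← iterate_add_apply,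
    iterate_mod_minimalPeriod_eq]

theorem Central.map_cycleProdAt_of_sameCycle [Finite ι] {f : A →ₗ[ℤ] B} (hf : Central f)
    (a : ι → A) {σ : Equiv.Perm ι} {x y : ι} (h : σ.SameCycle x y) :
    f (cycleProdAt a σ y) = f (cycleProdAt a σ x) := by
  obtain ⟨k, rfl⟩ := h.exists_nat_pow_eq
  rw [cycleProdAt_pow_apply, hf.map_prod_rotate, cycleProdAt]

theorem cycleProdAt_of_apply_eq (a : ι → A) {σ : Equiv.Perm ι} {x : ι} (h : σ x = x) :
    cycleProdAt a σ x = a x := by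
  simp [cycleProdAt, minimalPeriod_eq_one_iff_isFixedPt.mpr h]

theorem cycleProdAt_extendDomain_apply_image {α : Type*} {p : ι → Prop} [DecidablePred p]
    (a : ι → A) (τ : Equiv.Perm α) (e : α ≃ Subtype p) (x : α) :
    cycleProdAt a (τ.extendDomain e) (e x) = cycleProdAt (fun i => a (e i)) τ x := by
  simp only [cycleProdAt, Equiv.Perm.minimalPeriod_extendDomain_apply_image,
    Equiv.Perm.extendDomain_pow_apply_image]

end CycleProd

section CycleMonomial

variable {ι κ A B : Type*} [Fintype ι] [LinearOrder κ] [Ring A] [CommRing B]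

def cycleMonomial (f : A →ₗ[ℤ] B) (g : ι → κ) (a : ι → A) (σ : Equiv.Perm ι) : B :=
  ∏ x, if ∀ j : ℕ, g x ≤ g ((σ ^ j) x) then f (cycleProdAt a σ x) else 1

theorem frob_eq_sum_cycleMonomial [DecidableEq ι] (f : A →ₗ[ℤ] B) (a : ι → A) :
    frob f a = ∑ σ, (Equiv.Perm.sign σ : ℤ) • cycleMonomial f (Fintype.equivFin ι) a σ :=
  rfl

theorem Central.cycleMonomial_congr {f : A →ₗ[ℤ] B} (hf : Central f) {κ' : Type*}
    [LinearOrder κ'] {g : ι → κ} {g' : ι → κ'} (hg : Injective g) (hg' : Injective g')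
    (a : ι → A) (σ : Equiv.Perm ι) : cycleMonomial f g a σ = cycleMonomial f g' a σ :=
  σ.prod_ite_forall_pow_le_congr hg hg' _ fun _ _ h =>
    (hf.map_cycleProdAt_of_sameCycle a h).symm

theorem cycleMonomial_extendDomain {α : Type*} [Fintype α] {p : ι → Prop} [DecidablePred p]
    (f : A →ₗ[ℤ] B) (g : ι → κ) (a : ι → A) (τ : Equiv.Perm α) (e : α ≃ Subtype p) :
    cycleMonomial f g a (τ.extendDomain e)
      = (∏ i : {i // ¬p i}, f (a i)) * cycleMonomial f (fun x => g (e x)) (fun x => a (e x)) τ := by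
  rw [cycleMonomial, ← Fintype.prod_subtype_mul_prod_subtype p, mul_comm, cycleMonomial,
    ← e.prod_comp]
  congr 1
  · refine Fintype.prod_congr _ _ fun i => ?_
    have hfix : ∀ j : ℕ, (τ.extendDomain e ^ j) i = i := fun j => by
      rw [← Equiv.Perm.extendDomain_pow, Equiv.Perm.extendDomain_apply_not_subtype _ _ i.2]
    rw [if_pos fun j => by rw [hfix j], cycleProdAt_of_apply_eq a (by simpa using hfix 1)]
  · simp only [Equiv.Perm.extendDomain_pow_apply_image, cycleProdAt_extendDomain_apply_image]

end CycleMonomial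

/-- The part of the defining sum of `f_n` coming from permutations fixing the last index
equals `f(aₙ) · f_{n-1}(a₁,…,a_{n-1})` (here with `n + 1` playing the role of `n ≥ 1`). -/
theorem stmt8 {A B : Type*} [Ring A] [CommRing B] (f : A →ₗ[ℤ] B) (hf : Central f)
    (n : ℕ) (a : Fin (n + 1) → A) :
    (∑ σ ∈ Finset.univ.filter
        (fun σ : Equiv.Perm (Fin (n + 1)) => σ (Fin.last n) = Fin.last n),
      (Equiv.Perm.sign σ : ℤ) •
        ∏ x : Fin (n + 1),
          if ∀ j : ℕ, (Fintype.equivFin (Fin (n + 1))) x ≤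
              (Fintype.equivFin (Fin (n + 1))) ((σ ^ j) x)
          then f (cycleProdAt a σ x) else 1)
      = f (a (Fin.last n)) * frob f (fun i : Fin n => a i.castSucc) := by
  set e := finSuccAboveEquiv (Fin.last n)
  have he : ∀ i, (e i : Fin (n + 1)) = i.castSucc := by simp [e, finSuccAboveEquiv_apply]
  rw [frob_eq_sum_cycleMonomial, mul_sum]
  symm
  refine sum_nbij (fun τ => τ.extendDomain e) (fun τ _ => ?_)
    (Equiv.Perm.extendDomainHom_injective e).injOn (fun σ hσ => ?_) (fun τ _ => ?_)
  · simpa using Equiv.Perm.extendDomain_apply_not_subtype τ e (not_not.mpr rfl)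
  · obtain ⟨τ, hτ⟩ := Equiv.Perm.exists_extendDomain_eq e fun b hb => by
      rw [not_not.mp hb]; exact (mem_filter.mp hσ).2
    exact ⟨τ, mem_univ τ, hτ⟩
  · have hlast : ∏ i : {i // ¬i ≠ Fin.last n}, f (a i) = f (a (Fin.last n)) :=
      Fintype.prod_eq_single (⟨Fin.last n, not_not.mpr rfl⟩ : {i // ¬i ≠ Fin.last n}) fun i hi =>
        absurd (Subtype.ext (not_not.mp i.2)) hi
    change _ = _ • cycleMonomial f (Fintype.equivFin _) a _
    rw [Equiv.Perm.sign_extendDomain, cycleMonomial_extendDomain, hlast, mul_smul_comm]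
    simp only [he]
    exact congrArg _ (congrArg _ (hf.cycleMonomial_congr (Fintype.equivFin _).injective
      ((Fintype.equivFin _).injective.comp (Fin.castSucc_injective n)) _ τ))
end
end

section
/- Let A be a ring and B a commutative ring. Let f, g : A → B be two central ℤ-linear maps, let p ∈ ℕ, let a_1, …, a_p ∈ A, and let U and V be disjoint subsets of [p] with U ∪ V = [p]. Then Σ_σ sgn(σ) · Π_c t_c = f_U(a) · g_V(a), where the sum ranges over all permutations σ ∈ S_p with σ(U) ⊆ U and σ(V) ⊆ V, the product runs over all cycles c = (i_1, i_2, …, i_k) of σ, and t_c equals f(a_{i_1} a_{i_2} ⋯ a_{i_k}) if all elements of c belong to U, and equals g(a_{i_1} a_{i_2} ⋯ a_{i_k}) if all elements of c belong to V (every cycle of such σ lies entirely in U or entirely in V). -/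
open scoped Classical

noncomputable section

/-!
A permutation `σ` preserving `U` and `V` is the same as the pair of its restrictions `σ_U`, `σ_V`;
`sgn σ = sgn σ_U · sgn σ_V`, and the cycles of `σ` are those of `σ_U` together with those of
`σ_V`, so each summand on the left factors into a summand of `f_U(a)` times one of `g_V(a)`.
What makes the cycle factors match is that the weight of a cycle depends neither on the point
from which its product is read (centrality turns `f (a x * T)` into `f (T * a x)`) nor on the
ranking used to single that point out: under any injective ranking, each cycle has exactly one
minimal point, so the product over minimal points is a product over the cycles themselves.
-/

open Equiv Finset Function

namespace Equiv.Perm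

variable {ι : Type*} (σ : Perm ι) (x : ι)

theorem minimalPeriod_apply [Finite ι] : minimalPeriod σ (σ x) = minimalPeriod σ x :=
  Function.minimalPeriod_apply (σ.injective.mem_periodicPts x)

theorem pow_minimalPeriod_apply : (σ ^ minimalPeriod σ x) x = x := by
  rw [← iterate_eq_pow, iterate_minimalPeriod]

theorem minimalPeriod_subtypePerm {p : ι → Prop} (h : ∀ x, p (σ x) ↔ p x) (x : {x // p x}) :
    minimalPeriod (σ.subtypePerm h) x = minimalPeriod σ x := by
  refine minimalPeriod_eq_minimalPeriod_iff.mpr fun n => ?_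
  simp only [IsPeriodicPt, IsFixedPt, iterate_eq_pow, subtypePerm_pow, Subtype.ext_iff,
    subtypePerm_apply]

variable {σ} in
theorem SameCycle.apply_eq_of_invariant [Finite ι] {β : Type*} {F : ι → β}
    (hF : ∀ x, F (σ x) = F x) {x y : ι} (h : σ.SameCycle x y) : F y = F x := by
  obtain ⟨i, rfl⟩ := h.exists_nat_pow_eq
  clear h
  induction i with
  | zero => rfl
  | succ i ih => rw [pow_succ', mul_apply, hF, ih]

end Equiv.Perm

section CycleProd

variable {ι A B : Type*} [Ring A] [CommRing B]

theorem exists_cycleProdAt_eq_mul [Finite ι] (a : ι → A) (σ : Perm ι) (x : ι) :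
    ∃ T, cycleProdAt a σ x = a x * T ∧ cycleProdAt a σ (σ x) = T * a x := by
  obtain ⟨n, hn⟩ : ∃ n, minimalPeriod σ x = n + 1 :=
    Nat.exists_eq_succ_of_ne_zero
      (minimalPeriod_pos_of_mem_periodicPts (σ.injective.mem_periodicPts x)).ne'
  refine ⟨((List.range n).map fun j => a ((σ ^ (j + 1)) x)).prod, ?_, ?_⟩
  · rw [cycleProdAt, hn, List.prod_range_succ']
    simp
  · have hx : (σ ^ (n + 1)) x = x := hn ▸ σ.pow_minimalPeriod_apply x
    simp only [cycleProdAt, σ.minimalPeriod_apply, hn, List.prod_range_succ, ← Perm.mul_apply,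
      ← pow_succ, hx]

theorem Central.map_cycleProdAt_apply [Finite ι] {f : A →ₗ[ℤ] B} (hf : Central f) (a : ι → A)
    (σ : Perm ι) (x : ι) : f (cycleProdAt a σ (σ x)) = f (cycleProdAt a σ x) := by
  obtain ⟨T, hx, hσx⟩ := exists_cycleProdAt_eq_mul a σ x
  rw [hx, hσx, hf]

theorem cycleProdAt_subtypePerm {p : ι → Prop} (a : ι → A) (σ : Perm ι)
    (h : ∀ x, p (σ x) ↔ p x) (x : {x // p x}) :
    cycleProdAt (fun y : {x // p x} => a y) (σ.subtypePerm h) x = cycleProdAt a σ x := by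
  simp only [cycleProdAt, σ.minimalPeriod_subtypePerm, Perm.subtypePerm_pow,
    Perm.subtypePerm_apply]

end CycleProd

section CycleLeaders

variable {ι κ M : Type*} [LinearOrder κ] [CommMonoid M]

def prodCycleLeaders [Fintype ι] (r : ι → κ) (σ : Perm ι) (F : ι → M) : M :=
  ∏ x, if ∀ j : ℕ, r x ≤ r ((σ ^ j) x) then F x else 1

theorem prodCycleLeaders_eq_prod_quotient [Fintype ι] {r : ι → κ} (hr : Injective r)
    (σ : Perm ι) {F : ι → M} (hF : ∀ x, F (σ x) = F x) :
    prodCycleLeaders r σ F = ∏ c : Quotient (Perm.SameCycle.setoid σ),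
      c.lift F fun _ _ h => (h.apply_eq_of_invariant hF).symm := by
  rw [prodCycleLeaders, ← prod_filter]
  refine prod_bij (fun x _ => Quotient.mk _ x) (fun _ _ => mem_univ _) ?_ ?_ fun _ _ => rfl
  · intro x hx y hy hxy
    obtain ⟨i, rfl⟩ := (Quotient.exact hxy).exists_nat_pow_eq
    obtain ⟨j, hj⟩ := (Quotient.exact hxy).symm.exists_nat_pow_eq
    exact hr <| le_antisymm ((mem_filter.mp hx).2 i)
      ((mem_filter.mp hy).2 j |>.trans_eq (congrArg r hj))
  · refine Quotient.ind fun y _ => ?_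
    obtain ⟨x, hx, hmin⟩ :=
      exists_min_image {z | σ.SameCycle y z} r ⟨y, (mem_filter_univ y).mpr (.refl σ y)⟩
    rw [mem_filter_univ] at hx
    refine ⟨x, mem_filter.mpr ⟨mem_univ _, fun j => hmin _ ?_⟩, Quotient.sound hx.symm⟩
    simpa using hx.trans (Perm.SameCycle.refl σ x |>.pow_right (n := j))

theorem prodCycleLeaders_congr_ranking [Fintype ι] {κ' : Type*} [LinearOrder κ'] {r : ι → κ}
    {r' : ι → κ'} (hr : Injective r) (hr' : Injective r') (σ : Perm ι) {F : ι → M}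
    (hF : ∀ x, F (σ x) = F x) :
    prodCycleLeaders r σ F = prodCycleLeaders r' σ F := by
  rw [prodCycleLeaders_eq_prod_quotient hr σ hF, prodCycleLeaders_eq_prod_quotient hr' σ hF]

theorem prodCycleLeaders_subtypePerm (r : ι → κ) (σ : Perm ι) (s : Finset ι)
    (h : ∀ x, σ x ∈ s ↔ x ∈ s) (F : ι → M) :
    prodCycleLeaders (fun y : s => r y) (σ.subtypePerm h) (fun y => F y) =
      ∏ x ∈ s, if ∀ j : ℕ, r x ≤ r ((σ ^ j) x) then F x else 1 := by
  rw [← prod_coe_sort, prodCycleLeaders]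
  simp only [Perm.subtypePerm_pow, Perm.subtypePerm_apply]

end CycleLeaders

theorem frob_eq_sum_prodCycleLeaders {ι A B : Type*} [Fintype ι] [DecidableEq ι] [Ring A]
    [CommRing B] (f : A →ₗ[ℤ] B) (a : ι → A) :
    frob f a = ∑ σ : Perm ι, (Perm.sign σ : ℤ) •
      prodCycleLeaders (Fintype.equivFin ι) σ fun x => f (cycleProdAt a σ x) :=
  rfl

theorem Central.prod_ite_eq_prodCycleLeaders_subtypePerm {ι κ A B : Type*} [Fintype ι]
    [DecidableEq ι] [LinearOrder κ] [Ring A] [CommRing B] {f : A →ₗ[ℤ] B} (hf : Central f)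
    {r : ι → κ} (hr : Injective r) (a : ι → A) (σ : Perm ι) (s : Finset ι)
    (h : ∀ x, σ x ∈ s ↔ x ∈ s) {F : ι → B}
    (hF : ∀ x ∈ s, F x = f (cycleProdAt a σ x)) :
    ∏ x ∈ s, (if ∀ j : ℕ, r x ≤ r ((σ ^ j) x) then F x else 1) =
      prodCycleLeaders (Fintype.equivFin s) (σ.subtypePerm h)
        fun y => f (cycleProdAt (fun y : s => a y) (σ.subtypePerm h) y) := by
  have hFs : (fun y : s => F y) =
      fun y => f (cycleProdAt (fun y : s => a y) (σ.subtypePerm h) y) :=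
    funext fun y => by rw [hF y y.2, cycleProdAt_subtypePerm]
  rw [← prodCycleLeaders_subtypePerm r σ s h, hFs]
  exact prodCycleLeaders_congr_ranking (hr.comp Subtype.val_injective)
    (Fintype.equivFin s).injective _ (hf.map_cycleProdAt_apply _ _)

namespace Equiv.Perm

variable {ι : Type*} [Fintype ι] [DecidableEq ι] {U V : Finset ι}

theorem apply_mem_iff_of_mapsTo (hUV : _root_.Disjoint U V) (hunion : U ∪ V = univ)
    {σ : Perm ι} (hU : ∀ x ∈ U, σ x ∈ U) (hV : ∀ x ∈ V, σ x ∈ V) (x : ι) :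
    σ x ∈ U ↔ x ∈ U := by
  refine ⟨fun hσx => ?_, hU x⟩
  by_contra hx
  have hxV : x ∈ V := (mem_union.mp (hunion ▸ mem_univ x)).resolve_left hx
  exact disjoint_left.mp hUV hσx (hV x hxV)

theorem ofSubtype_subtypePerm_mul_ofSubtype_subtypePerm (hUV : _root_.Disjoint U V)
    (hunion : U ∪ V = univ) (σ : Perm ι) (hU : ∀ x, σ x ∈ U ↔ x ∈ U)
    (hV : ∀ x, σ x ∈ V ↔ x ∈ V) :
    ofSubtype (σ.subtypePerm hU) * ofSubtype (σ.subtypePerm hV) = σ := by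
  ext x
  rcases mem_union.mp (hunion ▸ mem_univ x) with hx | hx
  · rw [mul_apply, ofSubtype_apply_of_not_mem _ (disjoint_left.mp hUV hx),
      ofSubtype_subtypePerm_of_mem _ hx]
  · rw [mul_apply, ofSubtype_subtypePerm_of_mem _ hx,
      ofSubtype_apply_of_not_mem _ (disjoint_right.mp hUV ((hV x).mpr hx))]

theorem sign_eq_sign_subtypePerm_mul (hUV : _root_.Disjoint U V) (hunion : U ∪ V = univ)
    (σ : Perm ι) (hU : ∀ x, σ x ∈ U ↔ x ∈ U) (hV : ∀ x, σ x ∈ V ↔ x ∈ V) :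
    sign σ = sign (σ.subtypePerm hU) * sign (σ.subtypePerm hV) := by
  conv_lhs => rw [← ofSubtype_subtypePerm_mul_ofSubtype_subtypePerm hUV hunion σ hU hV]
  rw [map_mul, sign_ofSubtype, sign_ofSubtype]

def mapsToEquivProd (hUV : _root_.Disjoint U V) (hunion : U ∪ V = univ) :
    {σ : Perm ι // (∀ x ∈ U, σ x ∈ U) ∧ ∀ x ∈ V, σ x ∈ V} ≃
      Perm U × Perm V where
  toFun σ := (σ.1.subtypePerm (apply_mem_iff_of_mapsTo hUV hunion σ.2.1 σ.2.2),
    σ.1.subtypePerm (apply_mem_iff_of_mapsTo hUV.symm (union_comm V U ▸ hunion) σ.2.2 σ.2.1))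
  invFun τ := ⟨ofSubtype τ.1 * ofSubtype τ.2,
    fun x hx => by
      rw [mul_apply, ofSubtype_apply_of_not_mem _ (disjoint_left.mp hUV hx),
        ofSubtype_apply_of_mem _ hx]
      exact (τ.1 _).2,
    fun x hx => by
      rw [mul_apply, ofSubtype_apply_of_mem _ hx,
        ofSubtype_apply_of_not_mem _ (disjoint_right.mp hUV (τ.2 _).2)]
      exact (τ.2 _).2⟩
  left_inv σ := Subtype.ext <| ofSubtype_subtypePerm_mul_ofSubtype_subtypePerm hUV hunion σ.1
    (apply_mem_iff_of_mapsTo hUV hunion σ.2.1 σ.2.2)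
    (apply_mem_iff_of_mapsTo hUV.symm (union_comm V U ▸ hunion) σ.2.2 σ.2.1)
  right_inv τ := by
    ext x
    · simp [ofSubtype_apply_of_not_mem _ (disjoint_left.mp hUV x.2)]
    · simp [ofSubtype_apply_of_not_mem _ (disjoint_right.mp hUV (τ.2 x).2)]

end Equiv.Perm

/-- For a decomposition `[p] = U ⊔ V`, the sum over permutations preserving both `U` and
`V`, with each cycle weighted by `f` (if it lies in `U`) or `g` (if it lies in `V`),
equals `f_U(a) · g_V(a)`. -/
theorem stmt10 {A B : Type*} [Ring A] [CommRing B] (f g : A →ₗ[ℤ] B)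
    (hf : Central f) (hg : Central g) (p : ℕ) (a : Fin p → A)
    (U V : Finset (Fin p)) (hUV : Disjoint U V) (hunion : U ∪ V = Finset.univ) :
    (∑ σ ∈ Finset.univ.filter
        (fun σ : Equiv.Perm (Fin p) => (∀ x ∈ U, σ x ∈ U) ∧ (∀ x ∈ V, σ x ∈ V)),
      (Equiv.Perm.sign σ : ℤ) •
        ∏ x : Fin p,
          if ∀ j : ℕ, (Fintype.equivFin (Fin p)) x ≤ (Fintype.equivFin (Fin p)) ((σ ^ j) x)
          then (if x ∈ U then f (cycleProdAt a σ x) else g (cycleProdAt a σ x))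
          else 1)
      = frob f (fun x : {x // x ∈ U} => a x.1) *
          frob g (fun x : {x // x ∈ V} => a x.1) := by
  rw [frob_eq_sum_prodCycleLeaders, frob_eq_sum_prodCycleLeaders, sum_mul_sum,
    ← Fintype.sum_prod_type', sum_subtype _ fun σ => mem_filter_univ σ]
  refine Fintype.sum_equiv (Perm.mapsToEquivProd hUV hunion) _ _ fun ⟨σ, hσU, hσV⟩ => ?_
  have hU := Perm.apply_mem_iff_of_mapsTo hUV hunion hσU hσV
  have hV := Perm.apply_mem_iff_of_mapsTo hUV.symm (union_comm V U ▸ hunion) hσV hσU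
  have hr := (Fintype.equivFin (Fin p)).injective
  rw [Perm.sign_eq_sign_subtypePerm_mul hUV hunion σ hU hV, ← hunion, prod_union hUV,
    hf.prod_ite_eq_prodCycleLeaders_subtypePerm hr a σ U hU fun x hx => if_pos hx,
    hg.prod_ite_eq_prodCycleLeaders_subtypePerm hr a σ V hV
      fun x hx => if_neg (disjoint_right.mp hUV hx), Units.val_mul]
  exact (smul_mul_smul_comm _ _ _ _).symm
end
end

section
/- Let A be a ring and B a commutative ring, let n ∈ ℕ, and let f_1, f_2, …, f_n : A → B be nonunital ring homomorphisms. Then the sum f_1 + f_2 + ⋯ + f_n is an n-homomorphism. -/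
open scoped Classical

noncomputable section

/-! Since every `f_k` is multiplicative, `f = ∑ f_k` sends the product along a cycle `c` of
`σ` to `∑_k ∏_{y ∈ c} f_k(a_y)`; multiplying over the cycles of `σ` gives a sum over the
colourings `g : ι → κ` constant on the cycles of `σ`, i.e. with `g ∘ σ = g`. Exchanging
the sums, the Frobenius map becomes `∑_g (∑_{σ, g ∘ σ = g} sgn σ) ∏_y f_{g y}(a_y)`. With
`n + 1` arguments and `n` maps, every colouring `g` identifies two indices `x ≠ y`, and left
multiplication by the transposition `(x y)` is a sign-reversing bijection of `{σ | g ∘ σ = g}`,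
so each inner sum vanishes. -/

open Finset Equiv

section CycleRep

variable {ι : Type*} [Fintype ι] {σ : Perm ι} {x y : ι}

-- The condition in `frob`: `x` comes first in its `σ`-cycle for the enumeration `equivFin ι`.
def IsCycleRep (σ : Perm ι) (x : ι) : Prop :=
  ∀ j : ℕ, Fintype.equivFin ι x ≤ Fintype.equivFin ι ((σ ^ j) x)

def cycleReps (σ : Perm ι) : Finset ι :=
  univ.filter (IsCycleRep σ)

theorem IsCycleRep.eq_of_sameCycle (hx : IsCycleRep σ x) (hy : IsCycleRep σ y)
    (h : σ.SameCycle x y) : x = y := by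
  obtain ⟨j, rfl⟩ := h.exists_nat_pow_eq
  obtain ⟨k, hk⟩ := h.symm.exists_nat_pow_eq
  refine (Fintype.equivFin ι).injective (le_antisymm (hx j) ?_)
  simpa only [hk] using hy k

theorem exists_sameCycle_isCycleRep (σ : Perm ι) (y : ι) :
    ∃ x, σ.SameCycle y x ∧ IsCycleRep σ x := by
  obtain ⟨x, hx, hmin⟩ := (univ.filter (σ.SameCycle y)).exists_min_image (Fintype.equivFin ι)
    ⟨y, mem_filter.2 ⟨mem_univ _, Perm.SameCycle.refl σ y⟩⟩
  have hyx := (mem_filter.1 hx).2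
  exact ⟨x, hyx, fun j =>
    hmin _ (mem_filter.2 ⟨mem_univ _, Perm.sameCycle_pow_right.2 hyx⟩)⟩

def cycleRep (σ : Perm ι) (y : ι) : ι :=
  (exists_sameCycle_isCycleRep σ y).choose

theorem sameCycle_cycleRep (σ : Perm ι) (y : ι) : σ.SameCycle y (cycleRep σ y) :=
  (exists_sameCycle_isCycleRep σ y).choose_spec.1

theorem isCycleRep_cycleRep (σ : Perm ι) (y : ι) : IsCycleRep σ (cycleRep σ y) :=
  (exists_sameCycle_isCycleRep σ y).choose_spec.2

theorem cycleRep_mem_cycleReps (σ : Perm ι) (y : ι) : cycleRep σ y ∈ cycleReps σ :=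
  mem_filter.2 ⟨mem_univ _, isCycleRep_cycleRep σ y⟩

theorem cycleRep_eq_iff (hx : IsCycleRep σ x) : cycleRep σ y = x ↔ σ.SameCycle x y :=
  ⟨fun h => h ▸ (sameCycle_cycleRep σ y).symm,
    fun h => (isCycleRep_cycleRep σ y).eq_of_sameCycle hx
      ((sameCycle_cycleRep σ y).symm.trans h.symm)⟩

theorem cycleRep_pow_apply (hx : IsCycleRep σ x) (j : ℕ) : cycleRep σ ((σ ^ j) x) = x :=
  (cycleRep_eq_iff hx).2 (Perm.sameCycle_pow_right.2 (Perm.SameCycle.refl σ x))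

theorem cycleRep_apply (σ : Perm ι) (y : ι) : cycleRep σ (σ y) = cycleRep σ y :=
  (cycleRep_eq_iff (isCycleRep_cycleRep σ y)).2
    (Perm.sameCycle_apply_right.2 (sameCycle_cycleRep σ y).symm)

theorem prod_sameCycle {M : Type*} [CommMonoid M] (σ : Perm ι) (x : ι) (F : ι → M) :
    ∏ y ∈ univ.filter (σ.SameCycle x), F y
      = ∏ j ∈ range (Function.minimalPeriod σ x), F ((σ ^ j) x) := by
  have horbit : univ.filter (σ.SameCycle x)
      = (range (Function.minimalPeriod σ x)).image fun j => (σ ^ j) x := by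
    ext y
    simp only [mem_filter, mem_univ, true_and, mem_image, mem_range]
    refine ⟨fun h => ?_, fun ⟨j, _, hj⟩ =>
      hj ▸ Perm.sameCycle_pow_right.2 (Perm.SameCycle.refl σ x)⟩
    obtain ⟨j, rfl⟩ := h.exists_nat_pow_eq
    refine ⟨j % Function.minimalPeriod σ x, Nat.mod_lt _ ?_, ?_⟩
    · exact Function.minimalPeriod_pos_of_mem_periodicPts (σ.injective.mem_periodicPts x)
    · simp only [Perm.coe_pow, Function.iterate_mod_minimalPeriod_eq]
  rw [horbit, prod_image]
  intro i hi j hj hij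
  exact Function.iterate_injOn_Iio_minimalPeriod (by simpa using hi) (by simpa using hj)
    (by simpa only [Perm.coe_pow] using hij)

theorem prod_eq_prod_cycleReps {M : Type*} [CommMonoid M] (σ : Perm ι) (F : ι → M) :
    ∏ y, F y
      = ∏ x ∈ cycleReps σ, ∏ j ∈ range (Function.minimalPeriod σ x), F ((σ ^ j) x) := by
  rw [← prod_fiberwise_of_maps_to (fun y _ => cycleRep_mem_cycleReps σ y)]
  refine prod_congr rfl fun x hx => ?_
  rw [← prod_sameCycle]
  congr 1
  ext y
  simp [cycleRep_eq_iff (mem_filter.1 hx).2]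

theorem apply_cycleRep_of_comp_eq {κ : Type*} {g : ι → κ}
    (hg : g ∘ σ = g) (y : ι) : g (cycleRep σ y) = g y := by
  obtain ⟨j, hj⟩ := (sameCycle_cycleRep σ y).exists_nat_pow_eq
  have hsemiconj : Function.Semiconj g σ id := fun z => congrFun hg z
  rw [← hj, Perm.coe_pow, (hsemiconj.iterate_right j).eq, Function.iterate_id, id]

theorem prod_cycleReps_sum {κ R : Type*} [DecidableEq ι] [Fintype κ] [CommSemiring R]
    (σ : Perm ι) (F : κ → ι → R) :
    ∏ x ∈ cycleReps σ, ∑ k, ∏ j ∈ range (Function.minimalPeriod σ x), F k ((σ ^ j) x)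
      = ∑ g ∈ univ.filter (fun g : ι → κ => g ∘ σ = g), ∏ y, F (g y) y := by
  rw [← prod_coe_sort, Fintype.prod_sum]
  refine sum_nbij' (fun c y => c ⟨cycleRep σ y, cycleRep_mem_cycleReps σ y⟩)
    (fun g x => g x) (fun c _ => ?_) (fun _ _ => mem_univ _) (fun c _ => ?_) (fun g hg => ?_)
    (fun c _ => ?_)
  · refine mem_filter.2 ⟨mem_univ _, funext fun y => ?_⟩
    simp only [Function.comp_apply, cycleRep_apply]
  · funext x
    have hx : IsCycleRep σ x := (mem_filter.1 x.2).2
    exact congrArg c (Subtype.ext ((cycleRep_eq_iff hx).2 (Perm.SameCycle.refl σ x)))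
  · funext y
    exact apply_cycleRep_of_comp_eq (mem_filter.1 hg).2 y
  · rw [prod_eq_prod_cycleReps σ, ← prod_coe_sort (cycleReps σ)]
    refine prod_congr rfl fun x _ => prod_congr rfl fun j _ => ?_
    have hx : IsCycleRep σ x := (mem_filter.1 x.2).2
    simp only [cycleRep_pow_apply hx]

end CycleRep

theorem map_cycleProdAt {ι A B F : Type*} [Fintype ι] [Ring A] [CommMonoid B] [FunLike F A B]
    [MulHomClass F A B] (f : F) (a : ι → A) (σ : Perm ι) (x : ι) :
    f (cycleProdAt a σ x) = ∏ j ∈ range (Function.minimalPeriod σ x), f (a ((σ ^ j) x)) := by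
  have hperiod : Function.minimalPeriod σ x ≠ 0 :=
    (Function.minimalPeriod_pos_of_mem_periodicPts (σ.injective.mem_periodicPts x)).ne'
  rw [cycleProdAt, ← List.prod_hom_nonempty f (by simpa using hperiod), List.map_map]
  rfl

theorem central_sum_of_map_mul {κ A B : Type*} [Fintype κ] [Ring A] [CommRing B]
    (fs : κ → A →ₗ[ℤ] B) (hfs : ∀ k, ∀ a a' : A, fs k (a * a') = fs k a * fs k a') :
    Central (∑ k, fs k) := by
  intro a a'
  simp only [LinearMap.sum_apply, hfs, mul_comm]

theorem sum_sign_comp_eq_self_eq_zero {ι κ : Type*} [Fintype ι] [DecidableEq ι] {g : ι → κ}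
    (hg : ¬ Function.Injective g) :
    ∑ σ ∈ univ.filter (fun σ : Perm ι => g ∘ σ = g), (Perm.sign σ : ℤ) = 0 := by
  obtain ⟨x, y, hgxy, hxy⟩ : ∃ x y, g x = g y ∧ x ≠ y := by
    simpa [Function.Injective] using hg
  have hswap : g ∘ Equiv.swap x y = g := by
    funext z
    simp only [Function.comp_apply, Equiv.swap_apply_def]
    split_ifs with hzx hzy
    · rw [hzx, hgxy]
    · rw [hzy, hgxy]
    · rfl
  have hperm : ∑ σ ∈ univ.filter (fun σ : Perm ι => g ∘ σ = g), (Perm.sign σ : ℤ)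
      = ∑ σ ∈ univ.filter (fun σ : Perm ι => g ∘ σ = g),
          (Perm.sign (Equiv.swap x y * σ) : ℤ) := by
    refine (sum_nbij' (Equiv.swap x y * ·) (Equiv.swap x y * ·) ?_ ?_ ?_ ?_ ?_).symm <;>
      simp [Perm.coe_mul, ← Function.comp_assoc, hswap]
  simp only [map_mul, Perm.sign_swap hxy, Units.val_neg, neg_one_mul, sum_neg_distrib] at hperm
  linarith

theorem frob_sum_of_map_mul {ι κ A B : Type*} [Fintype ι] [DecidableEq ι] [Fintype κ] [Ring A]
    [CommRing B] (fs : κ → A →ₗ[ℤ] B)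
    (hfs : ∀ k, ∀ a a' : A, fs k (a * a') = fs k a * fs k a') (a : ι → A) :
    frob (∑ k, fs k) a = ∑ g : ι → κ,
      (∑ σ ∈ univ.filter (fun σ : Perm ι => g ∘ σ = g), (Perm.sign σ : ℤ)) •
        ∏ y, fs (g y) (a y) := by
  have hcycles : ∀ σ : Perm ι,
      ∏ x, (if IsCycleRep σ x then (∑ k, fs k) (cycleProdAt a σ x) else 1)
        = ∑ g ∈ univ.filter (fun g : ι → κ => g ∘ σ = g), ∏ y, fs (g y) (a y) := by
    intro σ
    let φ : κ → A →ₙ* B := fun k => ⟨fs k, hfs k⟩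
    rw [← prod_filter]
    simp only [LinearMap.sum_apply, show ∀ k, ⇑(fs k) = φ k from fun _ => rfl, map_cycleProdAt]
    exact prod_cycleReps_sum σ fun k y => φ k (a y)
  calc frob (∑ k, fs k) a
      = ∑ σ : Perm ι, ∑ g ∈ univ.filter (fun g : ι → κ => g ∘ σ = g),
          (Perm.sign σ : ℤ) • ∏ y, fs (g y) (a y) := by
        simp only [frob, ← smul_sum]
        exact sum_congr rfl fun σ _ => congrArg _ (hcycles σ)
    _ = _ := by
        rw [sum_comm' (t' := univ) (s' := fun g => univ.filter fun σ : Perm ι => g ∘ σ = g)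
          (fun σ g => by simp)]
        simp only [sum_smul]

/-- The sum of `n` nonunital ring homomorphisms (given as multiplicative `ℤ`-linear maps)
is an `n`-homomorphism. -/
theorem stmt15 {A B : Type*} [Ring A] [CommRing B] (n : ℕ)
    (fs : Fin n → (A →ₗ[ℤ] B))
    (hfs : ∀ i, ∀ a a' : A, fs i (a * a') = fs i a * fs i a') :
    IsNHom n (∑ i, fs i) := by
  refine ⟨central_sum_of_map_mul fs hfs, fun a => ?_⟩
  rw [frob_sum_of_map_mul fs hfs a]
  refine sum_eq_zero fun g _ => ?_
  have hg : ¬ Function.Injective g := fun hinj => by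
    simpa using Fintype.card_le_of_injective g hinj
  rw [sum_sign_comp_eq_self_eq_zero hg, zero_smul]
end
end
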